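/- arXiv:1211.3724 — 3 statements merged into one kernel-verified Lean document; each statement's English description precedes it below -/
import Mathlib

section
/- Under the same hypotheses (argmin of the problem min{ψ₁(x) : ψ₂(x) ≤ τ} is nonempty and contained in {x : ψ₂(x) = τ}), the set of minimizers of min{ψ₁(x) : ψ₂(x) ≤ τ} equals the set of minimizers of min{ψ₂(x) : ψ₁(x) ≤ v₁(τ)}, and every such minimizer x satisfies ψ₁(x) = v₁(τ). -/
noncomputable section

/-- Value function of `min ψ₁ s.t. ψ₂ ≤ τ`. -/
def valFn {X : Type*} (ψ₁ ψ₂ : X → EReal) (τ : EReal) : EReal :=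
  ⨅ x ∈ {x | ψ₂ x ≤ τ}, ψ₁ x

/-- Minimizers of `min ψ₁ s.t. ψ₂ ≤ τ`. -/
def argminSet {X : Type*} (ψ₁ ψ₂ : X → EReal) (τ : EReal) : Set X :=
  {x | ψ₂ x ≤ τ ∧ ψ₁ x = valFn ψ₁ ψ₂ τ}

/-!
If every minimizer is active, a point with `ψ₁ x ≤ v₁(τ)` cannot satisfy `ψ₂ x < τ` (it would be
an inactive minimizer), so the swapped problem has value at least `τ`; a minimizer attains `τ`.
Hence the swapped value is exactly `τ`, and both argmin sets are
`{x | ψ₂ x ≤ τ ∧ ψ₁ x ≤ v₁(τ)}`.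
-/

section

variable {X : Type*} {ψ₁ ψ₂ : X → EReal} {τ : EReal} {x : X}

theorem valFn_le (h : ψ₂ x ≤ τ) : valFn ψ₁ ψ₂ τ ≤ ψ₁ x :=
  iInf₂_le x h

theorem mem_argminSet_iff :
    x ∈ argminSet ψ₁ ψ₂ τ ↔ ψ₂ x ≤ τ ∧ ψ₁ x ≤ valFn ψ₁ ψ₂ τ :=
  and_congr_right fun h => ⟨le_of_eq, fun hle => le_antisymm hle (valFn_le h)⟩

theorem le_of_le_valFn (hact : ∀ x ∈ argminSet ψ₁ ψ₂ τ, ψ₂ x = τ)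
    (hx : ψ₁ x ≤ valFn ψ₁ ψ₂ τ) : τ ≤ ψ₂ x := by
  by_contra! h
  exact h.ne (hact x (mem_argminSet_iff.2 ⟨h.le, hx⟩))

theorem valFn_valFn_eq (hne : (argminSet ψ₁ ψ₂ τ).Nonempty)
    (hact : ∀ x ∈ argminSet ψ₁ ψ₂ τ, ψ₂ x = τ) : valFn ψ₂ ψ₁ (valFn ψ₁ ψ₂ τ) = τ := by
  obtain ⟨x₀, hx₀⟩ := hne
  refine le_antisymm ?_ (le_iInf₂ fun x hx => le_of_le_valFn hact hx)
  calc valFn ψ₂ ψ₁ (valFn ψ₁ ψ₂ τ) ≤ ψ₂ x₀ := valFn_le hx₀.2.le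
    _ = τ := hact x₀ hx₀

end

/-- under the same hypotheses, the two argmin sets coincide, and every
minimizer `x` satisfies `ψ₁ x = v₁ τ`. -/
theorem stmt1 {X : Type*} (ψ₁ ψ₂ : X → EReal) (τ : EReal)
    (hne : (argminSet ψ₁ ψ₂ τ).Nonempty)
    (hact : ∀ x ∈ argminSet ψ₁ ψ₂ τ, ψ₂ x = τ) :
    argminSet ψ₁ ψ₂ τ = argminSet ψ₂ ψ₁ (valFn ψ₁ ψ₂ τ) ∧
    ∀ x ∈ argminSet ψ₁ ψ₂ τ, ψ₁ x = valFn ψ₁ ψ₂ τ := by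
  refine ⟨Set.ext fun x => ?_, fun x hx => hx.2⟩
  rw [mem_argminSet_iff, mem_argminSet_iff, valFn_valFn_eq hne hact]
  exact and_comm
end
end

section
/- Let φ : ℝⁿ → ℝ∪{+∞} be closed, proper, convex. For any s ∈ ℝⁿ and τ ∈ ℝ, σ_{lev(φ,τ)}(s) ≤ inf_{μ ≥ 0} [τμ + (φ*)^π(s, μ)]. -/
open scoped Pointwise
noncomputable section

abbrev En (n : ℕ) := EuclideanSpace ℝ (Fin n)

/-- Fenchel conjugate. -/
def econj {n : ℕ} (h : En n → EReal) (y : En n) : EReal :=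
  ⨆ x : En n, (((inner ℝ y x : ℝ)) : EReal) - h x

/-- Horizon (recession) function. -/
def ehorizon {n : ℕ} (h : En n → EReal) (z : En n) : EReal :=
  ⨆ x ∈ {x : En n | h x ≠ ⊤}, (h (x + z) - h x)

/-- Closed perspective function. -/
def epersp {n : ℕ} (h : En n → EReal) (p : En n × ℝ) : EReal :=
  if 0 < p.2 then ((p.2 : ℝ) : EReal) * h (p.2⁻¹ • p.1)
  else if p.2 = 0 then ehorizon h p.1 else ⊤

/-- Support function of a set. -/
def esupp {n : ℕ} (C : Set (En n)) (y : En n) : EReal :=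
  ⨆ x ∈ C, (((inner ℝ y x : ℝ)) : EReal)

/-- A proper function: somewhere finite and never `-∞`. -/
def IsProperFn {n : ℕ} (h : En n → EReal) : Prop := (∃ x, h x ≠ ⊤) ∧ ∀ x, h x ≠ ⊥

/-- Convexity of an extended-real-valued function, via convexity of its epigraph. -/
def IsConvexFn {n : ℕ} (h : En n → EReal) : Prop :=
  Convex ℝ {p : En n × ℝ | h p.1 ≤ (p.2 : EReal)}

/-!
For `x` in the level set and `μ > 0`, the Fenchel–Young inequality gives
`⟪s, x⟫ ≤ μ φ x + μ φ* (s / μ) ≤ τ μ + μ φ* (s / μ)`.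
For `μ = 0` we need `⟪s, x⟫ ≤ (φ*)^∞ s`. Fenchel–Young says `φ*` lies above the affine map
`y ↦ ⟪y, x⟫ - φ x`, so along any ray `y₀ + k s` it grows at rate at least `⟪s, x⟫`, whereas each
step of length `s` raises it by at most `(φ*)^∞ s`. This needs one point `y₀` where `φ*` is finite,
i.e. an affine minorant of `φ`, obtained by separating a point below the graph of `φ` from its
closed convex epigraph.
-/

theorem LowerSemicontinuous.isClosed_real_epigraph {X : Type*} [TopologicalSpace X]
    {φ : X → EReal} (hφ : LowerSemicontinuous φ) :
    IsClosed {p : X × ℝ | φ p.1 ≤ (p.2 : EReal)} :=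
  hφ.isClosed_epigraph.preimage (continuous_id.prodMap continuous_coe_real_ereal)

theorem exists_affine_minorant_of_lowerSemicontinuous {E : Type*} [NormedAddCommGroup E]
    [NormedSpace ℝ E] {φ : E → EReal} (hlsc : LowerSemicontinuous φ)
    (hconv : Convex ℝ {p : E × ℝ | φ p.1 ≤ (p.2 : EReal)})
    {x₀ : E} (hx₀ : φ x₀ ≠ ⊤) (hbot : ∀ x, φ x ≠ ⊥) :
    ∃ (ℓ : StrongDual ℝ E) (b : ℝ), ∀ x, ((ℓ x + b : ℝ) : EReal) ≤ φ x := by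
  set a₀ := (φ x₀).toReal
  have ha₀ : φ x₀ = a₀ := (EReal.coe_toReal hx₀ (hbot x₀)).symm
  obtain ⟨f, u, hfu, hepi⟩ := geometric_hahn_banach_point_closed hconv
    hlsc.isClosed_real_epigraph (x := (x₀, a₀ - 1))
    (by rw [Set.mem_ofPred_eq, ha₀, not_le]; exact_mod_cast sub_one_lt a₀)
  set ℓ : StrongDual ℝ E := f.comp (ContinuousLinearMap.inl ℝ E ℝ)
  set c := f (0, 1)
  have hf : ∀ z t, f (z, t) = ℓ z + t * c := fun z t => by
    have hzt : ((z, t) : E × ℝ) = (z, 0) + t • (0, 1) := by simp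
    rw [hzt, map_add, map_smul, smul_eq_mul]
    rfl
  -- separating `(x₀, a₀ - 1)` from `(x₀, a₀)` forces the vertical coefficient to be positive
  have hc : 0 < c := by
    have := hepi (x₀, a₀) (by simp [ha₀])
    rw [hf] at this hfu
    linarith
  refine ⟨-c⁻¹ • ℓ, u / c, fun x => ?_⟩
  rcases eq_or_ne (φ x) ⊤ with hx | hx
  · simp [hx]
  have hxa : φ x = (φ x).toReal := (EReal.coe_toReal hx (hbot x)).symm
  have := hepi (x, (φ x).toReal) (by simp [← hxa])
  rw [hf] at this
  rw [hxa, EReal.coe_le_coe_iff, show (-c⁻¹ • ℓ) x + u / c = (u - ℓ x) / c by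
    simp only [FunLike.coe_smul, Pi.smul_apply, smul_eq_mul]; field_simp; ring,
    div_le_iff₀ hc]
  linarith

theorem inner_sub_le_econj {n : ℕ} (φ : En n → EReal) (x y : En n) :
    ((inner ℝ y x : ℝ) : EReal) - φ x ≤ econj φ y :=
  le_iSup (fun z => ((inner ℝ y z : ℝ) : EReal) - φ z) x

theorem econj_le_of_affine_minorant {n : ℕ} {φ : En n → EReal} {y : En n} {b : ℝ}
    (h : ∀ x, ((inner ℝ y x + b : ℝ) : EReal) ≤ φ x) : econj φ y ≤ ((-b : ℝ) : EReal) := by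
  refine iSup_le fun x => ?_
  rw [EReal.sub_le_iff_le_add (.inr (EReal.coe_ne_top _)) (.inr (EReal.coe_ne_bot _))]
  refine le_trans (le_of_eq ?_) (add_le_add_right (h x) _)
  rw [← EReal.coe_add, EReal.coe_eq_coe_iff]
  ring

theorem exists_econj_ne_top {n : ℕ} {φ : En n → EReal} (hclosed : LowerSemicontinuous φ)
    (hproper : IsProperFn φ) (hconvex : IsConvexFn φ) : ∃ y, econj φ y ≠ ⊤ := by
  obtain ⟨x₀, hx₀⟩ := hproper.1
  obtain ⟨ℓ, b, hℓ⟩ := exists_affine_minorant_of_lowerSemicontinuous hclosed hconvex hx₀ hproper.2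
  refine ⟨(InnerProductSpace.toDual ℝ (En n)).symm ℓ, ne_top_of_le_ne_top (EReal.coe_ne_top (-b))
    (econj_le_of_affine_minorant fun x => ?_)⟩
  simpa only [InnerProductSpace.toDual_symm_apply] using hℓ x

theorem apply_add_smul_le_of_ehorizon_le {n : ℕ} {h : En n → EReal} {s y₀ : En n} {M : ℝ}
    (hM : ehorizon h s ≤ M) (hy₀ : h y₀ ≠ ⊤) (k : ℕ) :
    h (y₀ + (k : ℝ) • s) ≤ h y₀ + ((k * M : ℝ) : EReal) := by
  induction k with
  | zero => simp
  | succ k ih =>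
    have hk : h (y₀ + (k : ℝ) • s) ≠ ⊤ :=
      ne_top_of_le_ne_top (EReal.add_ne_top hy₀ (EReal.coe_ne_top _)) ih
    have hstep : h (y₀ + (k : ℝ) • s + s) - h (y₀ + (k : ℝ) • s) ≤ M :=
      (le_iSup₂ (f := fun y (_ : y ∈ {y | h y ≠ ⊤}) => h (y + s) - h y) _ hk).trans hM
    rw [EReal.sub_le_iff_le_add (.inr (EReal.coe_ne_top _)) (.inr (EReal.coe_ne_bot _))] at hstep
    calc h (y₀ + ((k + 1 : ℕ) : ℝ) • s) = h (y₀ + (k : ℝ) • s + s) := by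
          rw [Nat.cast_succ, add_smul, one_smul, add_assoc]
      _ ≤ M + (h y₀ + ((k * M : ℝ) : EReal)) := hstep.trans (add_le_add_right ih _)
      _ = h y₀ + (((k + 1 : ℕ) * M : ℝ) : EReal) := by
          rw [add_comm, add_assoc, ← EReal.coe_add]; congr 2; push_cast; ring

theorem inner_le_ehorizon {n : ℕ} {h : En n → EReal} {x y₀ : En n} {a : ℝ}
    (hmin : ∀ y, ((inner ℝ y x - a : ℝ) : EReal) ≤ h y) (hy₀ : h y₀ ≠ ⊤) (s : En n) :
    ((inner ℝ s x : ℝ) : EReal) ≤ ehorizon h s := by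
  by_contra! hlt
  obtain ⟨M, hM, hMs⟩ := EReal.lt_iff_exists_real_btwn.1 hlt
  have hb : h y₀ = (h y₀).toReal :=
    (EReal.coe_toReal hy₀ (ne_bot_of_le_ne_bot (EReal.coe_ne_bot _) (hmin y₀))).symm
  have hgrowth : ∀ k : ℕ, inner ℝ y₀ x + k * inner ℝ s x - a ≤ (h y₀).toReal + k * M := by
    intro k
    have := (hmin _).trans (apply_add_smul_le_of_ehorizon_le hM.le hy₀ k)
    rwa [hb, ← EReal.coe_add, EReal.coe_le_coe_iff, inner_add_left, real_inner_smul_left] at this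
  have hgap : 0 < inner ℝ s x - M := sub_pos.2 (EReal.coe_lt_coe_iff.1 hMs)
  obtain ⟨k, hk⟩ := exists_nat_gt (((h y₀).toReal + a - inner ℝ y₀ x) / (inner ℝ s x - M))
  rw [div_lt_iff₀ hgap] at hk
  linarith [hgrowth k]

theorem inner_le_mul_add_epersp_econj {n : ℕ} {φ : En n → EReal} (hφ : ∃ y, econj φ y ≠ ⊤)
    {x : En n} {a : ℝ} (hx : φ x = a) (s : En n) {μ : ℝ} (hμ : 0 ≤ μ) :
    ((inner ℝ s x : ℝ) : EReal) ≤ ((μ * a : ℝ) : EReal) + epersp (econj φ) (s, μ) := by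
  have hFY : ∀ y, ((inner ℝ y x - a : ℝ) : EReal) ≤ econj φ y := fun y => by
    simpa only [hx, EReal.coe_sub] using inner_sub_le_econj φ x y
  rcases hμ.eq_or_lt with rfl | hμ
  · obtain ⟨y₀, hy₀⟩ := hφ
    simpa [epersp] using inner_le_ehorizon hFY hy₀ s
  · rw [epersp, if_pos hμ]
    calc ((inner ℝ s x : ℝ) : EReal)
        = ((μ * a : ℝ) : EReal) + (μ : EReal) * ((inner ℝ (μ⁻¹ • s) x - a : ℝ) : EReal) := by
          rw [← EReal.coe_mul, ← EReal.coe_add, real_inner_smul_left, EReal.coe_eq_coe_iff]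
          field_simp
          ring
      _ ≤ ((μ * a : ℝ) : EReal) + (μ : EReal) * econj φ (μ⁻¹ • s) :=
          add_le_add_right (mul_le_mul_of_nonneg_left (hFY _) (EReal.coe_nonneg.2 hμ.le)) _

/-- `σ_{lev(φ,τ)}(s) ≤ inf_{μ ≥ 0} [τμ + (φ*)^π(s, μ)]`. -/
theorem stmt6 {n : ℕ} (φ : En n → EReal)
    (hclosed : LowerSemicontinuous φ) (hproper : IsProperFn φ) (hconvex : IsConvexFn φ)
    (s : En n) (τ : ℝ) :
    esupp {x | φ x ≤ (τ : EReal)} s ≤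
      ⨅ μ : ℝ, ⨅ _ : 0 ≤ μ, (((τ * μ : ℝ)) : EReal) + epersp (econj φ) (s, μ) := by
  have hφ := exists_econj_ne_top hclosed hproper hconvex
  refine le_iInf₂ fun μ hμ => iSup₂_le fun x (hxτ : φ x ≤ τ) => ?_
  have hxa : φ x = (φ x).toReal :=
    (EReal.coe_toReal (ne_top_of_le_ne_top (EReal.coe_ne_top τ) hxτ) (hproper.2 x)).symm
  have haτ : (φ x).toReal ≤ τ := EReal.coe_le_coe_iff.1 (hxa ▸ hxτ)
  calc ((inner ℝ s x : ℝ) : EReal)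
      ≤ ((μ * (φ x).toReal : ℝ) : EReal) + epersp (econj φ) (s, μ) :=
        inner_le_mul_add_epersp_econj hφ hxa s hμ
    _ ≤ ((τ * μ : ℝ) : EReal) + epersp (econj φ) (s, μ) :=
        add_le_add_left (EReal.coe_le_coe_iff.2 (by nlinarith)) _
end
end

section
/- Let φ(x) = sup_{w ∈ U}[⟨x,w⟩ − ½⟨w,Bw⟩] with U nonempty closed convex containing 0 and B positive semidefinite. Then dom φ = cone(U°) + Ran(B) and the horizon cone hzn(φ) = (cone U)°. In particular, φ is coercive if and only if 0 ∈ int U. -/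
open scoped Pointwise
noncomputable section

/-- Quadratic support function `φ(x) = sup_{w ∈ U} [⟨x,w⟩ − ½⟨w,Bw⟩]`. -/
def qsFn {n : ℕ} (U : Set (En n)) (B : En n →L[ℝ] En n) (x : En n) : EReal :=
  ⨆ w ∈ U, (((inner ℝ x w : ℝ) - (1 / 2) * (inner ℝ w (B w) : ℝ) : ℝ) : EReal)

/-- Polar set. -/
def epolarSet {n : ℕ} (U : Set (En n)) : Set (En n) :=
  {v | ∀ u ∈ U, (inner ℝ v u : ℝ) ≤ 1}

/-- Cone generated by a set: `{λu : λ ≥ 0, u ∈ C}`. -/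
def econeGen {n : ℕ} (C : Set (En n)) : Set (En n) :=
  {x | ∃ lam : ℝ, 0 ≤ lam ∧ ∃ u ∈ C, x = lam • u}

/-- Polar cone. -/
def epolarCone {n : ℕ} (K : Set (En n)) : Set (En n) :=
  {v | ∀ x ∈ K, (inner ℝ v x : ℝ) ≤ 0}

/-!
Write `q w = ⟪w, B w⟫`. A point `x` lies in `dom φ` iff the convex function `f w = q w / 2 - ⟪x, w⟫`
is bounded below on `U`, say by `m`. Separating the strict epigraph of `f` from `U × (-∞, m]` gives
an affine minorant `g + c` of `f` with `g + c ≥ m` on `U`. Then `-g` is bounded above on `U`, so it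
lies in `cone U°`, while `⟪x + g, w⟫ ≤ -c + q w / 2` for all `w` forces `x + g ⊥ ker B`, i.e.
`x + g ∈ Ran B`. Conversely `U°` is `≤ 1` on `U`, and `⟪B z, w⟫ - q w / 2 ≤ q z / 2`.

If `⟪y, ·⟫ ≤ 0` on `U` then `φ (x + y) ≤ φ x`; if `⟪y, u⟫ > 0` for some `u ∈ U`, a small multiple
of `u` shows `φ y > 0 = φ 0`. A ball of radius `δ` inside `U` gives `φ x ≥ δ ‖x‖ - δ² ‖B‖ / 2`;
if `0 ∉ int U`, a supporting hyperplane at `0` gives a ray along which `φ ≤ 0`.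
-/

open Filter Metric Set Bornology InnerProductSpace
open scoped RealInnerProductSpace

section Quadratic
variable {E : Type*} [NormedAddCommGroup E] [InnerProductSpace ℝ E] {B : E →L[ℝ] E}

namespace ContinuousLinearMap.IsPositive

lemma two_mul_inner_apply_le (hB : B.IsPositive) (z w : E) :
    2 * ⟪z, B w⟫ ≤ ⟪z, B z⟫ + ⟪w, B w⟫ := by
  have hzw := hB.inner_nonneg_right (z - w)
  have hsymm : ⟪w, B z⟫ = ⟪z, B w⟫ := by
    rw [← hB.inner_left_eq_inner_right, real_inner_comm]
  simp only [map_sub, inner_sub_left, inner_sub_right, hsymm] at hzw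
  linarith

lemma convexOn_inner_apply_self (hB : B.IsPositive) : ConvexOn ℝ univ fun w ↦ ⟪w, B w⟫ := by
  refine ⟨convex_univ, fun w _ v _ a b ha hb hab ↦ ?_⟩
  have hcross := hB.two_mul_inner_apply_le w v
  have hsymm : ⟪v, B w⟫ = ⟪w, B v⟫ := by
    rw [← hB.inner_left_eq_inner_right, real_inner_comm]
  simp only [map_add, map_smul, inner_add_left, inner_add_right, real_inner_smul_left,
    real_inner_smul_right, hsymm, smul_eq_mul]
  obtain rfl : b = 1 - a := by linarith
  nlinarith [mul_nonneg ha hb]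

end ContinuousLinearMap.IsPositive

lemma LinearMap.IsSymmetric.range_eq_orthogonal_ker [FiniteDimensional ℝ E] {T : E →ₗ[ℝ] E}
    (hT : T.IsSymmetric) : LinearMap.range T = (LinearMap.ker T)ᗮ := by
  rw [← hT.orthogonal_range, Submodule.orthogonal_orthogonal]

lemma eq_zero_of_forall_mul_le {a M : ℝ} (h : ∀ t : ℝ, t * a ≤ M) : a = 0 := by
  by_contra ha
  have := h ((M + 1) / a)
  rw [div_mul_cancel₀ _ ha] at this
  linarith

lemma mem_range_of_inner_le_add_inner_apply [FiniteDimensional ℝ E]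
    (hB : (B : E →ₗ[ℝ] E).IsSymmetric) {c : E} {M : ℝ}
    (h : ∀ w, ⟪c, w⟫ ≤ M + ⟪w, B w⟫ / 2) : c ∈ range B := by
  suffices c ∈ (LinearMap.ker (B : E →ₗ[ℝ] E))ᗮ by
    rw [← hB.range_eq_orthogonal_ker] at this
    exact this
  refine fun w hw ↦ ?_
  have hBw : B w = 0 := hw
  rw [real_inner_comm]
  refine eq_zero_of_forall_mul_le (M := M) fun t ↦ ?_
  simpa [real_inner_smul_right, hBw] using h (t • w)

end Quadratic

lemma ConvexOn.exists_affine_le_of_le_on {E : Type*} [NormedAddCommGroup E] [NormedSpace ℝ E]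
    {f : E → ℝ} (hf : ConvexOn ℝ univ f) (hfc : Continuous f) {C : Set E} (hC : Convex ℝ C)
    (hCne : C.Nonempty) {m : ℝ} (hm : ∀ w ∈ C, m ≤ f w) :
    ∃ (g : StrongDual ℝ E) (c : ℝ), (∀ w, g w + c ≤ f w) ∧ ∀ w ∈ C, m ≤ g w + c := by
  have hK : IsOpen {p : E × ℝ | p.1 ∈ univ ∧ f p.1 < p.2} := by
    simpa using isOpen_lt (hfc.comp continuous_fst) continuous_snd
  have hdisj : Disjoint {p : E × ℝ | p.1 ∈ univ ∧ f p.1 < p.2} (C ×ˢ Iic m) :=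
    disjoint_left.2 fun p hpK hpL ↦ (hm p.1 hpL.1).not_gt (hpK.2.trans_le hpL.2)
  obtain ⟨φ, u, hφK, hφL⟩ :=
    geometric_hahn_banach_open hf.convex_strict_epigraph hK (hC.prod (convex_Iic m)) hdisj
  set g : StrongDual ℝ E := φ.comp (ContinuousLinearMap.inl ℝ E ℝ)
  set s := φ (0, 1)
  have hφ : ∀ w t, φ (w, t) = g w + t * s := fun w t ↦ by
    have : (w, t) = (w, 0) + t • ((0 : E), (1 : ℝ)) := by simp
    rw [this, map_add, map_smul, smul_eq_mul]
    rfl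
  have hepi : ∀ w t, f w < t → g w + t * s < u := fun w t h ↦ hφ w t ▸ hφK (w, t) ⟨trivial, h⟩
  have hcyl : ∀ w ∈ C, u ≤ g w + m * s := fun w hw ↦ hφ w m ▸ hφL (w, m) ⟨hw, mem_Iic.2 le_rfl⟩
  -- the separating hyperplane is not vertical, so it is the graph of an affine function
  have hs : s < 0 := by
    obtain ⟨w₀, hw₀⟩ := hCne
    by_contra! hs
    have h₁ := hepi w₀ (max (f w₀) m + 1) (by linarith [le_max_left (f w₀) m])
    have h₂ : m * s ≤ (max (f w₀) m + 1) * s :=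
      mul_le_mul_of_nonneg_right (by linarith [le_max_right (f w₀) m]) hs
    linarith [hcyl w₀ hw₀]
  have hgraph : ∀ w, g w + f w * s ≤ u := fun w ↦ by
    refine le_of_forall_pos_lt_add fun ε hε ↦ ?_
    have := hepi w (f w + ε / -s) (by have := div_pos hε (neg_pos.2 hs); linarith)
    rw [add_mul, div_mul_eq_mul_div, div_neg, mul_div_cancel_right₀ _ hs.ne] at this
    linarith
  have hrescale : ∀ w, ((-s)⁻¹ • g) w + u / s = (g w - u) / -s := fun w ↦ by
    simp only [smul_apply, smul_eq_mul]
    field_simp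
    ring
  refine ⟨(-s)⁻¹ • g, u / s, fun w ↦ ?_, fun w hw ↦ ?_⟩
  · rw [hrescale, div_le_iff₀ (neg_pos.2 hs)]
    linarith [hgraph w]
  · rw [hrescale, le_div_iff₀ (neg_pos.2 hs)]
    linarith [hcyl w hw]

lemma Convex.exists_inner_le_of_notMem_interior {E : Type*} [NormedAddCommGroup E]
    [InnerProductSpace ℝ E] [FiniteDimensional ℝ E] {U : Set E} (hU : Convex ℝ U) {x : E}
    (hxU : x ∈ U) (hx : x ∉ interior U) : ∃ y ≠ 0, ∀ w ∈ U, ⟪y, w⟫ ≤ ⟪y, x⟫ := by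
  by_cases hint : (interior U).Nonempty
  · obtain ⟨f, hf, hfU⟩ := geometric_hahn_banach_of_nonempty_interior_point hU hx hint
    refine ⟨(toDual ℝ E).symm f, by simpa using hf, fun w hw ↦ ?_⟩
    simpa only [toDual_symm_apply] using hfU w hw
  · -- `U` lies in a proper affine subspace through `x`; take a normal vector to it.
    have hspan : vectorSpan ℝ U ≠ ⊤ := by
      rwa [Ne, ← AffineSubspace.affineSpan_eq_top_iff_vectorSpan_eq_top_of_nonempty ℝ E E ⟨x, hxU⟩,
        ← hU.interior_nonempty_iff_affineSpan_eq_top]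
    obtain ⟨y, hy, hy0⟩ := (Submodule.ne_bot_iff _).1 <|
      mt Submodule.orthogonal_eq_bot_iff.1 hspan
    refine ⟨y, hy0, fun w hw ↦ ?_⟩
    have := Submodule.inner_left_of_mem_orthogonal (vsub_mem_vectorSpan ℝ hw hxU) hy
    rw [vsub_eq_sub, inner_sub_right, sub_eq_zero] at this
    exact this.le

section QuadraticSupport
variable {n : ℕ} {U : Set (En n)} {B : En n →L[ℝ] En n}

lemma coe_le_qsFn {x w : En n} (hw : w ∈ U) :
    ((⟪x, w⟫ - 1 / 2 * ⟪w, B w⟫ : ℝ) : EReal) ≤ qsFn U B x :=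
  le_iSup₂ (f := fun w (_ : w ∈ U) ↦ ((⟪x, w⟫ - 1 / 2 * ⟪w, B w⟫ : ℝ) : EReal)) w hw

lemma qsFn_le_coe {x : En n} {M : ℝ} (h : ∀ w ∈ U, ⟪x, w⟫ - 1 / 2 * ⟪w, B w⟫ ≤ M) :
    qsFn U B x ≤ M :=
  iSup₂_le fun w hw ↦ EReal.coe_le_coe_iff.2 (h w hw)

lemma qsFn_ne_top_iff {x : En n} :
    qsFn U B x ≠ ⊤ ↔ ∃ M : ℝ, ∀ w ∈ U, ⟪x, w⟫ - 1 / 2 * ⟪w, B w⟫ ≤ M := by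
  refine ⟨fun hx ↦ ⟨(qsFn U B x).toReal, fun w hw ↦ ?_⟩, fun ⟨M, hM⟩ ↦
    ne_top_of_le_ne_top (EReal.coe_ne_top M) (qsFn_le_coe hM)⟩
  have := EReal.toReal_le_toReal (coe_le_qsFn hw) (EReal.coe_ne_bot _) hx
  rwa [EReal.toReal_coe] at this

lemma qsFn_zero (hU0 : (0 : En n) ∈ U) (hB : B.IsPositive) : qsFn U B 0 = 0 := by
  refine le_antisymm ?_ (by simpa using coe_le_qsFn (x := 0) (B := B) hU0)
  simpa using qsFn_le_coe (U := U) (B := B) (x := 0) (M := 0) fun w _ ↦ by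
    simpa using hB.inner_nonneg_right w

lemma qsFn_add_le_of_inner_nonpos {x y : En n} (hy : ∀ u ∈ U, ⟪y, u⟫ ≤ 0) :
    qsFn U B (x + y) ≤ qsFn U B x :=
  iSup₂_le fun w hw ↦ by
    refine le_trans (EReal.coe_le_coe_iff.2 ?_) (coe_le_qsFn hw)
    linarith [inner_add_left (𝕜 := ℝ) x y w, hy w hw]

lemma qsFn_pos_of_inner_pos (hU : Convex ℝ U) (hU0 : (0 : En n) ∈ U) {y u : En n} (hu : u ∈ U)
    (hyu : 0 < ⟪y, u⟫) : 0 < qsFn U B y := by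
  set t := min 1 (⟪y, u⟫ / (|⟪u, B u⟫| + 1))
  have ht : 0 < t := lt_min one_pos (by positivity)
  have htu : t • u ∈ U := hU.smul_mem_of_zero_mem hU0 hu ⟨ht.le, min_le_left _ _⟩
  -- `t` is small enough that the quadratic term eats at most half of the linear one
  have hsmall : t * ⟪u, B u⟫ ≤ ⟪y, u⟫ := by
    calc t * ⟪u, B u⟫ ≤ t * (|⟪u, B u⟫| + 1) := by gcongr; linarith [le_abs_self ⟪u, B u⟫]
      _ ≤ ⟪y, u⟫ / (|⟪u, B u⟫| + 1) * (|⟪u, B u⟫| + 1) := by gcongr; exact min_le_right _ _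
      _ = ⟪y, u⟫ := div_mul_cancel₀ _ (by positivity)
  refine lt_of_lt_of_le (EReal.coe_lt_coe_iff.2 ?_) (coe_le_qsFn htu)
  simp only [map_smul, real_inner_smul_left, real_inner_smul_right]
  nlinarith

end QuadraticSupport

section Domain
variable {n : ℕ} {U : Set (En n)} {B : En n →L[ℝ] En n}

lemma mem_econeGen_epolarSet_of_forall_inner_le {C : Set (En n)} {v : En n} {m : ℝ}
    (h : ∀ u ∈ C, ⟪v, u⟫ ≤ m) : v ∈ econeGen (epolarSet C) := by
  have hlam : 0 < max m 1 := lt_max_of_lt_right one_pos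
  refine ⟨max m 1, hlam.le, (max m 1)⁻¹ • v, fun u hu ↦ ?_, ?_⟩
  · rw [real_inner_smul_left]
    exact inv_mul_le_one_of_le₀ ((h u hu).trans (le_max_left m 1)) hlam.le
  · rw [smul_smul, mul_inv_cancel₀ hlam.ne', one_smul]

lemma qsFn_ne_top_of_mem_add (hB : B.IsPositive) {x : En n}
    (hx : x ∈ econeGen (epolarSet U) + range B) : qsFn U B x ≠ ⊤ := by
  obtain ⟨_, ⟨lam, hlam, v, hv, rfl⟩, _, ⟨z, rfl⟩, rfl⟩ := hx
  refine qsFn_ne_top_iff.2 ⟨lam + 1 / 2 * ⟪z, B z⟫, fun w hw ↦ ?_⟩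
  have hvw : lam * ⟪v, w⟫ ≤ lam := mul_le_of_le_one_right hlam (hv w hw)
  have hzw := hB.two_mul_inner_apply_le z w
  rw [inner_add_left, real_inner_smul_left, hB.inner_left_eq_inner_right]
  linarith

lemma mem_add_of_qsFn_ne_top (hU : Convex ℝ U) (hU0 : (0 : En n) ∈ U) (hB : B.IsPositive)
    {x : En n} (hx : qsFn U B x ≠ ⊤) : x ∈ econeGen (epolarSet U) + range B := by
  obtain ⟨M, hM⟩ := qsFn_ne_top_iff.1 hx
  have hconv : ConvexOn ℝ univ fun w ↦ 1 / 2 * ⟪w, B w⟫ - ⟪x, w⟫ :=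
    (hB.convexOn_inner_apply_self.smul (by norm_num)).sub
      (((innerSL ℝ x : En n →L[ℝ] ℝ) : En n →ₗ[ℝ] ℝ).concaveOn convex_univ)
  obtain ⟨g, c, hg_le, hg_ge⟩ := hconv.exists_affine_le_of_le_on (by fun_prop) hU ⟨0, hU0⟩
    (m := -M) fun w hw ↦ by linarith [hM w hw]
  set y := (toDual ℝ (En n)).symm g
  have hy : ∀ w, ⟪y, w⟫ = g w := fun w ↦ toDual_symm_apply
  have hran : x + y ∈ range B := mem_range_of_inner_le_add_inner_apply hB.isSymmetric (M := -c)
    fun w ↦ by rw [inner_add_left, hy]; linarith [hg_le w]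
  have hcone : -y ∈ econeGen (epolarSet U) := mem_econeGen_epolarSet_of_forall_inner_le
    (m := M + c) fun w hw ↦ by rw [inner_neg_left, hy]; linarith [hg_ge w hw]
  exact ⟨-y, hcone, x + y, hran, neg_add_cancel_comm_assoc y x⟩

end Domain

section Horizon
variable {n : ℕ} {U : Set (En n)} {B : En n →L[ℝ] En n}

lemma mem_epolarCone_econeGen_iff {C : Set (En n)} {v : En n} :
    v ∈ epolarCone (econeGen C) ↔ ∀ u ∈ C, ⟪v, u⟫ ≤ 0 := by
  refine ⟨fun h u hu ↦ h u ⟨1, zero_le_one, u, hu, (one_smul ℝ u).symm⟩, ?_⟩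
  rintro h _ ⟨lam, hlam, u, hu, rfl⟩
  rw [real_inner_smul_right]
  exact mul_nonpos_of_nonneg_of_nonpos hlam (h u hu)

lemma ehorizon_le_zero_iff {h : En n → EReal} {y : En n} :
    ehorizon h y ≤ 0 ↔ ∀ x, h x ≠ ⊤ → h (x + y) ≤ h x := by
  simp only [ehorizon, iSup₂_le_iff, mem_ofPred_eq, EReal.sub_nonpos]

lemma ehorizon_qsFn_le_zero_iff (hU : Convex ℝ U) (hU0 : (0 : En n) ∈ U) (hB : B.IsPositive)
    {y : En n} : ehorizon (qsFn U B) y ≤ 0 ↔ ∀ u ∈ U, ⟪y, u⟫ ≤ 0 := by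
  refine ⟨fun h ↦ ?_, fun hy ↦ ehorizon_le_zero_iff.2 fun x _ ↦ qsFn_add_le_of_inner_nonpos hy⟩
  by_contra! ⟨u, hu, hyu⟩
  have := ehorizon_le_zero_iff.1 h 0 (by simp [qsFn_zero hU0 hB])
  rw [zero_add, qsFn_zero hU0 hB] at this
  exact (qsFn_pos_of_inner_pos hU hU0 hu hyu).not_ge this

end Horizon

section Coercivity
variable {n : ℕ} {U : Set (En n)} {B : En n →L[ℝ] En n}

lemma coe_le_qsFn_of_closedBall_subset {δ : ℝ} (hδ : 0 ≤ δ) (hball : closedBall 0 δ ⊆ U)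
    (x : En n) : ((δ * ‖x‖ - δ ^ 2 * ‖B‖ / 2 : ℝ) : EReal) ≤ qsFn U B x := by
  set w := (δ / ‖x‖) • x
  obtain ⟨hw, hxw⟩ : ‖w‖ ≤ δ ∧ ⟪x, w⟫ = δ * ‖x‖ := by
    rcases eq_or_ne x 0 with rfl | hx
    · simp [w, hδ]
    · have hx := norm_pos_iff.2 hx
      rw [norm_smul, Real.norm_of_nonneg (by positivity), div_mul_cancel₀ _ hx.ne',
        real_inner_smul_right, real_inner_self_eq_norm_sq]
      exact ⟨le_rfl, by field_simp⟩
  have hBw : ⟪w, B w⟫ ≤ δ ^ 2 * ‖B‖ :=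
    calc ⟪w, B w⟫ ≤ ‖w‖ * (‖B‖ * ‖w‖) :=
          (real_inner_le_norm w (B w)).trans (by gcongr; exact B.le_opNorm w)
      _ ≤ δ * (‖B‖ * δ) := by gcongr
      _ = δ ^ 2 * ‖B‖ := by ring
  refine le_trans (EReal.coe_le_coe_iff.2 ?_) (coe_le_qsFn (hball (mem_closedBall_zero_iff.2 hw)))
  linarith

lemma tendsto_qsFn_cobounded_of_zero_mem_interior (h0 : (0 : En n) ∈ interior U) :
    Tendsto (qsFn U B) (cobounded (En n)) (nhds ⊤) := by
  obtain ⟨δ, hδ, hball⟩ := nhds_basis_closedBall.mem_iff.1 (mem_interior_iff_mem_nhds.1 h0)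
  refine EReal.tendsto_nhds_top_iff_real.2 fun M ↦ ?_
  filter_upwards [tendsto_norm_cobounded_atTop.eventually_gt_atTop ((M + δ ^ 2 * ‖B‖ / 2) / δ)]
    with x hx
  refine lt_of_lt_of_le (EReal.coe_lt_coe_iff.2 ?_) (coe_le_qsFn_of_closedBall_subset hδ.le hball x)
  rw [div_lt_iff₀ hδ] at hx
  linarith

lemma zero_mem_interior_of_tendsto_qsFn (hU : Convex ℝ U) (hU0 : (0 : En n) ∈ U)
    (hB : B.IsPositive) (hT : Tendsto (qsFn U B) (cobounded (En n)) (nhds ⊤)) :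
    (0 : En n) ∈ interior U := by
  by_contra h0
  obtain ⟨y, hy0, hy⟩ := hU.exists_inner_le_of_notMem_interior hU0 h0
  have hray : Tendsto (fun t : ℝ ↦ t • y) atTop (cobounded (En n)) := by
    refine tendsto_norm_atTop_iff_cobounded.1 ?_
    simpa [norm_smul] using tendsto_abs_atTop_atTop.atTop_mul_const (norm_pos_iff.2 hy0)
  obtain ⟨t, ht, hpos⟩ := ((eventually_ge_atTop 0).and
    ((hT.comp hray).eventually (eventually_gt_nhds EReal.zero_lt_top))).exists
  have hle : qsFn U B (0 + t • y) ≤ qsFn U B 0 := qsFn_add_le_of_inner_nonpos fun w hw ↦ by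
    rw [real_inner_smul_left]
    exact mul_nonpos_of_nonneg_of_nonpos ht (by simpa using hy w hw)
  rw [zero_add, qsFn_zero hU0 hB] at hle
  exact hpos.not_ge hle

end Coercivity

theorem stmt15_general {n : ℕ} (U : Set (En n))
    (hUcv : Convex ℝ U) (hU0 : (0 : En n) ∈ U)
    (B : En n →L[ℝ] En n)
    (hsymm : ∀ x y : En n, (inner ℝ (B x) y : ℝ) = (inner ℝ x (B y) : ℝ))
    (hpsd : ∀ x : En n, 0 ≤ (inner ℝ x (B x) : ℝ)) :
    {x : En n | qsFn U B x ≠ ⊤} = econeGen (epolarSet U) + Set.range B ∧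
    {y : En n | ehorizon (qsFn U B) y ≤ 0} = epolarCone (econeGen U) ∧
    (Filter.Tendsto (qsFn U B) (Bornology.cobounded (En n)) (nhds ⊤) ↔
      (0 : En n) ∈ interior U) := by
  have hB : B.IsPositive := B.isPositive_iff.2 ⟨hsymm, fun x ↦ hsymm x x ▸ hpsd x⟩
  refine ⟨?_, ?_, ⟨zero_mem_interior_of_tendsto_qsFn hUcv hU0 hB,
    tendsto_qsFn_cobounded_of_zero_mem_interior⟩⟩
  · ext x
    exact ⟨mem_add_of_qsFn_ne_top hUcv hU0 hB, qsFn_ne_top_of_mem_add hB⟩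
  · ext y
    exact (ehorizon_qsFn_le_zero_iff hUcv hU0 hB).trans mem_epolarCone_econeGen_iff.symm

/-- `dom φ = cone(U°) + Ran B`, `hzn(φ) = (cone U)°`, and `φ` is
coercive iff `0 ∈ int U`. -/
theorem stmt15 {n : ℕ} (U : Set (En n))
    (hUne : U.Nonempty) (hUcl : IsClosed U) (hUcv : Convex ℝ U) (hU0 : (0 : En n) ∈ U)
    (B : En n →L[ℝ] En n)
    (hsymm : ∀ x y : En n, (inner ℝ (B x) y : ℝ) = (inner ℝ x (B y) : ℝ))
    (hpsd : ∀ x : En n, 0 ≤ (inner ℝ x (B x) : ℝ)) :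
    {x : En n | qsFn U B x ≠ ⊤} = econeGen (epolarSet U) + Set.range B ∧
    {y : En n | ehorizon (qsFn U B) y ≤ 0} = epolarCone (econeGen U) ∧
    (Filter.Tendsto (qsFn U B) (Bornology.cobounded (En n)) (nhds ⊤) ↔
      (0 : En n) ∈ interior U) :=
  stmt15_general U hUcv hU0 B hsymm hpsd
end
end
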